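/- arXiv:1508.07827 — 2 statements merged into one kernel-verified Lean document; each statement's English description precedes it below -/
import Mathlib

section
/- Let B be a barrier with boundary function b, and define the stopping time τ̃_B := inf{t > 0 : W_t > b(t)} (strict inequality). Then τ̃_B = τ_B almost surely. -/
open MeasureTheory ProbabilityTheory Filter Set

noncomputable section

/-- A barrier: a closed subset of `[0,∞) × ℝ` closed upwards in the space variable. -/
def IsBarrier (B : Set (ℝ × ℝ)) : Prop :=
  IsClosed B ∧ (∀ p ∈ B, 0 ≤ p.1) ∧ ∀ t x y : ℝ, (t, x) ∈ B → x ≤ y → (t, y) ∈ B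

/-- The boundary function `b(t) = inf {x : (t,x) ∈ B}` of a barrier (with `inf ∅ = ∞`). -/
def boundary (B : Set (ℝ × ℝ)) (t : ℝ) : EReal :=
  ⨅ x ∈ {x : ℝ | (t, x) ∈ B}, (x : EReal)

/-- A standard barrier: `b(0) = 0` and once the boundary is `-∞` it stays `-∞`. -/
def IsStandardBarrier (B : Set (ℝ × ℝ)) : Prop :=
  IsBarrier B ∧ boundary B 0 = 0 ∧
    ∀ t s : ℝ, 0 < t → boundary B t = ⊥ → t < s → boundary B s = ⊥

/-- A standard Brownian motion: continuous paths, `W₀ = 0` a.s., Gaussian increments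
`W_t - W_s ~ N(0, t-s)` independent of the past. -/
structure IsStandardBM {Ω : Type*} [MeasurableSpace Ω] (P : Measure Ω)
    (W : ℝ → Ω → ℝ) : Prop where
  meas : ∀ t, StronglyMeasurable (W t)
  cont : ∀ ω, Continuous fun t => W t ω
  init : ∀ᵐ ω ∂P, W 0 ω = 0
  incr : ∀ s t : ℝ, 0 ≤ s → s ≤ t →
    P.map (fun ω => W t ω - W s ω) = gaussianReal 0 (Real.toNNReal (t - s))
  indep : ∀ s t : ℝ, 0 ≤ s → s ≤ t →
    Indep (MeasurableSpace.comap (fun ω => W t ω - W s ω) inferInstance)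
      (⨆ u : Set.Icc (0 : ℝ) s, MeasurableSpace.comap (W u) inferInstance) P

/-- The first passage time `τ_B = inf {t > 0 : W_t ≥ b(t)}` (with values in `EReal`,
`inf ∅ = ∞`). -/
def tauB {Ω : Type*} (B : Set (ℝ × ℝ)) (W : ℝ → Ω → ℝ) (ω : Ω) : EReal :=
  ⨅ r : {r : ℝ // 0 < r ∧ boundary B r ≤ ((W r ω : ℝ) : EReal)}, ((r.1 : ℝ) : EReal)

/-- The survival distribution function `g(t) = P(τ_B > t)` of a barrier. -/
def survival {Ω : Type*} [MeasurableSpace Ω] (P : Measure Ω) (B : Set (ℝ × ℝ))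
    (W : ℝ → Ω → ℝ) (t : ℝ) : ℝ :=
  (P {ω | (t : EReal) < tauB B W ω}).toReal

/-- `u(t,x) = P(W_t ≤ x, τ_B > t)`. -/
def uFun {Ω : Type*} [MeasurableSpace Ω] (P : Measure Ω) (B : Set (ℝ × ℝ))
    (W : ℝ → Ω → ℝ) (t x : ℝ) : ℝ :=
  (P {ω | W t ω ≤ x ∧ (t : EReal) < tauB B W ω}).toReal

/-- A survival distribution function. -/
structure IsSurvival (g : ℝ → ℝ) : Prop where
  mono : AntitoneOn g (Set.Ici 0)
  rc : ∀ t : ℝ, 0 ≤ t → ContinuousWithinAt g (Set.Ici t) t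
  init : g 0 = 1
  mem : ∀ t : ℝ, 0 ≤ t → g t ∈ Set.Icc (0 : ℝ) 1

/-- The value `v(t,x)` of the optimal stopping problem associated with a survival
distribution function `g`: the infimum over stopping times `γ` of the natural filtration
of `W` with values in `[0,t]` of `E[g(t-γ) 1_{γ<t} + 1_{γ=t, x+W_t ≥ 0}]`. -/
def stopValue {Ω : Type*} [MeasurableSpace Ω] (P : Measure Ω) (W : ℝ → Ω → ℝ)
    (hW : ∀ s, StronglyMeasurable (W s)) (g : ℝ → ℝ) (t x : ℝ) : ℝ :=
  ⨅ γ : {γ : Ω → ℝ // IsStoppingTime (Filtration.natural W hW) (fun ω => (γ ω : WithTop ℝ)) ∧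
      ∀ ω, γ ω ∈ Set.Icc 0 t},
    ∫ ω, ({ω' | γ.1 ω' < t}.indicator (fun ω' => g (t - γ.1 ω')) ω
      + {ω' | γ.1 ω' = t ∧ 0 ≤ x + W t ω'}.indicator 1 ω) ∂P


/-- The first passage time over the boundary with strict inequality:
`τ̃_B = inf {t > 0 : W_t > b(t)}`. -/
def tauStrict {Ω : Type*} (B : Set (ℝ × ℝ)) (W : ℝ → Ω → ℝ) (ω : Ω) : EReal :=
  ⨅ r : {r : ℝ // 0 < r ∧ boundary B r < ((W r ω : ℝ) : EReal)}, ((r.1 : ℝ) : EReal)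

/-! If `τ_B < q < τ̃_B` with `q` rational, the path stays weakly below `b` on `(0, q]` and meets
it at some `s < q`. For rational `0 < a < s`, the supremum of `W_t - b(t)` over `[a, q]`, written
through countably many rational windows and shifted by `-W_a`, is a functional of the increments
of `W` after `a`, and on this event it equals `-W_a`. But `W_a` is Gaussian, hence atomless, and
independent of those increments, so for each of the countably many pairs `(a, q)` the event is
null. -/

open Topology

namespace ProbabilityTheory

variable {Ω : Type*} {mΩ : MeasurableSpace Ω} {P : Measure Ω}

theorem Indep.sup_right_of_indep_sup [IsZeroOrProbabilityMeasure P]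
    {m₁ m₂ m₃ : MeasurableSpace Ω} (h₁ : m₁ ≤ mΩ) (h₂ : m₂ ≤ mΩ) (h₃ : m₃ ≤ mΩ)
    (h₁₂ : Indep m₁ m₂ P) (h₃₁₂ : Indep m₃ (m₁ ⊔ m₂) P) : Indep m₁ (m₂ ⊔ m₃) P := by
  let p : Set (Set Ω) := image2 (· ∩ ·) {s | MeasurableSet[m₂] s} {s | MeasurableSet[m₃] s}
  have hp : IsPiSystem p := by
    rintro _ ⟨s₂, hs₂, s₃, hs₃, rfl⟩ _ ⟨t₂, ht₂, t₃, ht₃, rfl⟩ -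
    exact ⟨s₂ ∩ t₂, hs₂.inter ht₂, s₃ ∩ t₃, hs₃.inter ht₃, inter_inter_inter_comm _ _ _ _⟩
  have hgen : m₂ ⊔ m₃ = MeasurableSpace.generateFrom p := by
    refine le_antisymm (sup_le (fun s hs => ?_) (fun s hs => ?_))
      (MeasurableSpace.generateFrom_le ?_)
    · exact MeasurableSpace.measurableSet_generateFrom
        ⟨s, hs, univ, MeasurableSet.univ, inter_univ s⟩
    · exact MeasurableSpace.measurableSet_generateFrom
        ⟨univ, MeasurableSet.univ, s, hs, univ_inter s⟩
    · rintro _ ⟨s₂, hs₂, s₃, hs₃, rfl⟩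
      exact (le_sup_left (b := m₃) _ hs₂).inter (le_sup_right (a := m₂) _ hs₃)
  refine IndepSets.indep h₁ (sup_le h₂ h₃) (@MeasurableSpace.isPiSystem_measurableSet Ω m₁) hp
    (@MeasurableSpace.generateFrom_measurableSet Ω m₁).symm hgen ?_
  rw [IndepSets_iff]
  rintro s₁ _ hs₁ ⟨s₂, hs₂, s₃, hs₃, rfl⟩
  have e₁₂ := (Indep_iff _ _ _).1 h₁₂
  have e₃₁₂ := (Indep_iff _ _ _).1 h₃₁₂
  have hs₁₂ : MeasurableSet[m₁ ⊔ m₂] (s₁ ∩ s₂) :=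
    (le_sup_left (b := m₂) _ hs₁).inter (le_sup_right (a := m₁) _ hs₂)
  calc P (s₁ ∩ (s₂ ∩ s₃)) = P (s₃ ∩ (s₁ ∩ s₂)) := by rw [← inter_assoc, inter_comm]
    _ = P s₁ * (P s₃ * P s₂) := by rw [e₃₁₂ _ _ hs₃ hs₁₂, e₁₂ _ _ hs₁ hs₂]; ring
    _ = P s₁ * P (s₂ ∩ s₃) := by
      rw [inter_comm, e₃₁₂ _ _ hs₃ (le_sup_right (a := m₁) _ hs₂)]

theorem IndepFun.measure_eq_eq_zero [IsFiniteMeasure P] {X Y : Ω → ℝ} (hXY : IndepFun X Y P)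
    (hX : Measurable X) (hY : Measurable Y) [NullSingletonClass (P.map X)] :
    P {ω | X ω = Y ω} = 0 := by
  have hdiag : MeasurableSet {p : ℝ × ℝ | p.2 = p.1} :=
    measurableSet_eq_fun measurable_snd measurable_fst
  have hlaw : P.map (fun ω => (Y ω, X ω)) = (P.map Y).prod (P.map X) :=
    (indepFun_iff_map_prod_eq_prod_map_map hY.aemeasurable hX.aemeasurable).1 hXY.symm
  calc P {ω | X ω = Y ω} = P.map (fun ω => (Y ω, X ω)) {p | p.2 = p.1} :=
        (Measure.map_apply (hY.prodMk hX) hdiag).symm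
    _ = ∫⁻ y, P.map X {y} ∂P.map Y := by rw [hlaw, Measure.prod_apply hdiag]; rfl
    _ = 0 := by simp

end ProbabilityTheory

theorem iInf_ratIcc_le_of_continuous {f : ℝ → ℝ} (hf : Continuous f) {u v : ℚ} {t : ℝ}
    (ht : t ∈ Icc (u : ℝ) v) : ⨅ r : {r : ℚ // u ≤ r ∧ r ≤ v}, (f r : EReal) ≤ f t := by
  rcases eq_or_lt_of_le (ht.1.trans ht.2) with huv | huv
  · have htu : t = u := le_antisymm (ht.2.trans huv.ge) ht.1
    rw [htu]
    exact iInf_le_of_le ⟨u, le_rfl, by exact_mod_cast huv.le⟩ le_rfl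
  · have hclosed : IsClosed {x : ℝ | ⨅ r : {r : ℚ // u ≤ r ∧ r ≤ v}, (f r : EReal) ≤ f x} :=
      isClosed_le continuous_const (continuous_coe_real_ereal.comp hf)
    have hrat : Ioo (u : ℝ) v ∩ range ((↑) : ℚ → ℝ) ⊆
        {x : ℝ | ⨅ r : {r : ℚ // u ≤ r ∧ r ≤ v}, (f r : EReal) ≤ f x} := by
      rintro _ ⟨hx, r, rfl⟩
      rw [mem_ofPred_eq]
      exact iInf_le_of_le ⟨r, by exact_mod_cast hx.1.le, by exact_mod_cast hx.2.le⟩ le_rfl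
    have hdense : Ioo (u : ℝ) v ⊆ closure (Ioo (u : ℝ) v ∩ range ((↑) : ℚ → ℝ)) :=
      Rat.denseRange_cast.open_subset_closure_inter isOpen_Ioo
    rw [← closure_Ioo huv.ne] at ht
    exact closure_minimal hrat hclosed (closure_minimal hdense isClosed_closure ht)

theorem exists_rat_Icc_subset_of_mem_nhds {t : ℝ} {N : Set ℝ} (hN : N ∈ 𝓝 t) :
    ∃ u v : ℚ, (u : ℝ) < t ∧ t < v ∧ Icc (u : ℝ) v ⊆ N := by
  obtain ⟨δ, hδ, hball⟩ := Metric.mem_nhds_iff.1 hN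
  obtain ⟨u, hu₁, hu₂⟩ := exists_rat_btwn (sub_lt_self t hδ)
  obtain ⟨v, hv₁, hv₂⟩ := exists_rat_btwn (lt_add_of_pos_right t hδ)
  refine ⟨u, v, hu₂, hv₁, fun x hx => hball ?_⟩
  rw [Real.ball_eq_Ioo]
  exact ⟨hu₁.trans_le hx.1, hx.2.trans_lt hv₂⟩

section BrownianFiltration

variable {Ω : Type*}

abbrev pastSigma (W : ℝ → Ω → ℝ) (a : ℝ) : MeasurableSpace Ω :=
  ⨆ u : Icc (0 : ℝ) a, MeasurableSpace.comap (W u) inferInstance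

abbrev incrementSigma (W : ℝ → Ω → ℝ) (s t : ℝ) : MeasurableSpace Ω :=
  MeasurableSpace.comap (fun ω => W t ω - W s ω) inferInstance

abbrev futureSigma (W : ℝ → Ω → ℝ) (a : ℝ) : MeasurableSpace Ω :=
  ⨆ t : Ici a, incrementSigma W a t

theorem pastSigma_mono (W : ℝ → Ω → ℝ) : Monotone (pastSigma W) := fun _ _ h =>
  iSup_le fun u => le_iSup_of_le ⟨u, u.2.1, u.2.2.trans h⟩ le_rfl

theorem measurable_pastSigma (W : ℝ → Ω → ℝ) {a t : ℝ} (ht : t ∈ Icc 0 a) :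
    Measurable[pastSigma W a] (W t) :=
  (comap_measurable (W t)).mono (le_iSup_of_le ⟨t, ht⟩ le_rfl) le_rfl

theorem incrementSigma_le_pastSigma (W : ℝ → Ω → ℝ) {s t a : ℝ} (hs : 0 ≤ s) (hst : s ≤ t)
    (hta : t ≤ a) : incrementSigma W s t ≤ pastSigma W a :=
  ((measurable_pastSigma W ⟨hs.trans hst, hta⟩).sub
    (measurable_pastSigma W ⟨hs, hst.trans hta⟩)).comap_le

theorem incrementSigma_le_sup (W : ℝ → Ω → ℝ) (s m t : ℝ) :
    incrementSigma W s t ≤ incrementSigma W s m ⊔ incrementSigma W m t := by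
  have h : Measurable[incrementSigma W s m ⊔ incrementSigma W m t]
      fun ω => (W m ω - W s ω) + (W t ω - W m ω) :=
    ((comap_measurable _).mono le_sup_left le_rfl).add
      ((comap_measurable _).mono le_sup_right le_rfl)
  simpa only [incrementSigma, sub_add_sub_cancel'] using h.comap_le

variable [mΩ : MeasurableSpace Ω] {P : Measure Ω} {W : ℝ → Ω → ℝ}

namespace IsStandardBM

theorem pastSigma_le (hBM : IsStandardBM P W) (a : ℝ) : pastSigma W a ≤ mΩ :=
  iSup_le fun u => (hBM.meas u).measurable.comap_le

theorem incrementSigma_le (hBM : IsStandardBM P W) (s t : ℝ) : incrementSigma W s t ≤ mΩ :=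
  ((hBM.meas t).measurable.sub (hBM.meas s).measurable).comap_le

theorem futureSigma_le (hBM : IsStandardBM P W) (a : ℝ) : futureSigma W a ≤ mΩ :=
  iSup_le fun t => hBM.incrementSigma_le a t

theorem map_eq_gaussianReal (hBM : IsStandardBM P W) {t : ℝ} (ht : 0 ≤ t) :
    P.map (W t) = gaussianReal 0 t.toNNReal := by
  have hW0 : W t =ᵐ[P] fun ω => W t ω - W 0 ω := hBM.init.mono fun ω h => by simp [h]
  rw [Measure.map_congr hW0, hBM.incr 0 t le_rfl ht, sub_zero]

/-- Induction on the smallest time `m`: split `W t - W a = (W m - W a) + (W t - W m)`. -/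
theorem indep_biSup_incrementSigma_pastSigma [IsProbabilityMeasure P] (hBM : IsStandardBM P W)
    (s : Finset ℝ) :
    ∀ a, 0 ≤ a → (∀ t ∈ s, a ≤ t) →
      Indep (⨆ t ∈ s, incrementSigma W a t) (pastSigma W a) P := by
  classical
  induction s using Finset.induction_on_min with
  | empty => exact fun _ _ _ => by simpa using indep_bot_left _
  | insert m s hm ih =>
    intro a ha has
    have ham : a ≤ m := has m (Finset.mem_insert_self m s)
    have hlater :
        Indep (⨆ t ∈ s, incrementSigma W m t) (pastSigma W a ⊔ incrementSigma W a m) P :=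
      indep_of_indep_of_le_right (ih m (ha.trans ham) fun t ht => (hm t ht).le)
        (sup_le (pastSigma_mono W ham) (incrementSigma_le_pastSigma W ha ham le_rfl))
    have hgroup := (hBM.indep a m ha ham).symm.sup_right_of_indep_sup (hBM.pastSigma_le a)
      (hBM.incrementSigma_le a m) (iSup₂_le fun t _ => hBM.incrementSigma_le m t) hlater
    refine indep_of_indep_of_le_left hgroup.symm ?_
    rw [Finset.iSup_insert]
    refine sup_le le_sup_left (iSup₂_le fun t ht => (incrementSigma_le_sup W a m t).trans ?_)
    exact sup_le_sup_left (le_biSup (incrementSigma W m) ht) _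

theorem indep_futureSigma_pastSigma [IsProbabilityMeasure P] (hBM : IsStandardBM P W) {a : ℝ}
    (ha : 0 ≤ a) :
    Indep (futureSigma W a) (pastSigma W a) P := by
  rw [futureSigma, iSup_eq_iSup_finset]
  refine indep_iSup_of_directed_le (fun s => ?_)
    (fun s => iSup₂_le fun t _ => hBM.incrementSigma_le a t) (hBM.pastSigma_le a) ?_
  · refine indep_of_indep_of_le_left (hBM.indep_biSup_incrementSigma_pastSigma
      (s.map (Function.Embedding.subtype _)) a ha fun t ht => ?_) ?_
    · obtain ⟨t, -, rfl⟩ := Finset.mem_map.1 ht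
      exact t.2
    · exact iSup₂_le fun t ht => le_biSup (incrementSigma W a) (Finset.mem_map_of_mem _ ht)
  · exact Monotone.directed_le fun s s' h => biSup_mono fun _ => Finset.mem_of_subset h

end IsStandardBM

end BrownianFiltration

section WindowExcess

variable {Ω : Type*}

def boundaryWindows (b : ℝ → EReal) (a q : ℚ) : Set (ℚ × ℚ × ℚ) :=
  {p | a ≤ p.2.1 ∧ p.2.1 ≤ p.2.2 ∧ p.2.2 ≤ q ∧ ∃ t ∈ Icc (p.2.1 : ℝ) p.2.2, b t ≤ (p.1 : ℝ)}

/-- For a continuous path, `windowExcess b W a q ω + W a ω` is `sup_{t ∈ [a,q]} (W t ω - b t)`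
read off countably many windows `(c, u, v)`; subtracting `W a` makes it a function of the
increments after `a`. -/
def windowExcess (b : ℝ → EReal) (W : ℝ → Ω → ℝ) (a q : ℚ) (ω : Ω) : EReal :=
  ⨆ p : boundaryWindows b a q, ⨅ r : {r : ℚ // p.1.2.1 ≤ r ∧ r ≤ p.1.2.2},
    ((W r ω - W a ω - p.1.1 : ℝ) : EReal)

theorem measurable_windowExcess (b : ℝ → EReal) (W : ℝ → Ω → ℝ) (a q : ℚ) :
    Measurable[futureSigma W a] (windowExcess b W a q) := by
  refine Measurable.iSup fun p => Measurable.iInf fun r => ?_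
  have har : (a : ℝ) ≤ r := by exact_mod_cast p.2.1.trans r.2.1
  have hincr : Measurable[futureSigma W a] fun ω => W r ω - W a ω :=
    (comap_measurable _).mono (le_iSup_of_le ⟨r, har⟩ le_rfl) le_rfl
  exact (hincr.sub_const _).coe_real_ereal

variable {b : ℝ → EReal} {W : ℝ → Ω → ℝ} {a q : ℚ} {ω : Ω}

theorem windowExcess_le (hW : Continuous fun t => W t ω)
    (hb : ∀ t ∈ Icc (a : ℝ) q, (W t ω : EReal) ≤ b t) :
    windowExcess b W a q ω ≤ ((-W a ω : ℝ) : EReal) := by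
  refine iSup_le fun ⟨⟨c, u, v⟩, hau, _, hvq, t, ht, hbt⟩ => ?_
  have hat : (a : ℝ) ≤ t := (Rat.cast_le.2 hau).trans ht.1
  have htq : t ≤ q := ht.2.trans (Rat.cast_le.2 hvq)
  have hWt : W t ω ≤ c := EReal.coe_le_coe_iff.1 ((hb t ⟨hat, htq⟩).trans hbt)
  calc _ ≤ ((W t ω - W a ω - c : ℝ) : EReal) :=
        iInf_ratIcc_le_of_continuous ((hW.sub continuous_const).sub continuous_const) ht
    _ ≤ ((-W a ω : ℝ) : EReal) := EReal.coe_le_coe_iff.2 (by linarith)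

theorem le_windowExcess (hW : Continuous fun t => W t ω) {s : ℝ} (hs : s ∈ Ioo (a : ℝ) q)
    (hbs : b s ≤ W s ω) : ((-W a ω : ℝ) : EReal) ≤ windowExcess b W a q ω := by
  refine EReal.ge_of_forall_gt_iff_ge.1 fun z hz => ?_
  have hz' : z < -W a ω := EReal.coe_lt_coe_iff.1 hz
  set ε := (-W a ω - z) / 2 with hε_def
  have hε : 0 < ε := by linarith
  obtain ⟨c, hsc, hcs⟩ := exists_rat_btwn (lt_add_of_pos_right (W s ω) hε)
  have hN : Ioo (a : ℝ) q ∩ {r | W s ω - ε < W r ω} ∈ 𝓝 s :=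
    inter_mem (isOpen_Ioo.mem_nhds hs)
      (hW.continuousAt.eventually (lt_mem_nhds (sub_lt_self _ hε)))
  obtain ⟨u, v, hus, hsv, huv⟩ := exists_rat_Icc_subset_of_mem_nhds hN
  have hu := huv ⟨le_rfl, (hus.trans hsv).le⟩
  have hv := huv ⟨(hus.trans hsv).le, le_rfl⟩
  have hwindow : (c, u, v) ∈ boundaryWindows b a q :=
    ⟨by exact_mod_cast hu.1.1.le, by exact_mod_cast (hus.trans hsv).le,
      by exact_mod_cast hv.1.2.le, s, ⟨hus.le, hsv.le⟩,
      hbs.trans (EReal.coe_le_coe_iff.2 hsc.le)⟩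
  refine le_iSup_of_le ⟨_, hwindow⟩ (le_iInf fun r => EReal.coe_le_coe_iff.2 ?_)
  have hr := huv ⟨Rat.cast_le.2 (r.2.1 : u ≤ r), Rat.cast_le.2 (r.2.2 : (r : ℚ) ≤ v)⟩
  show z ≤ W r ω - W a ω - c
  linarith [hr.2.out]

end WindowExcess

theorem IsStandardBM.measure_windowExcess_eq_null {Ω : Type*} [MeasurableSpace Ω]
    {P : Measure Ω} [IsProbabilityMeasure P] {W : ℝ → Ω → ℝ} (hBM : IsStandardBM P W)
    (b : ℝ → EReal) {a : ℚ} (ha : 0 < a) (q : ℚ) :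
    P {ω | windowExcess b W a q ω = ((-W a ω : ℝ) : EReal)} = 0 := by
  have ha' : (0 : ℝ) ≤ a := by exact_mod_cast ha.le
  let Y : Ω → ℝ := fun ω => -(windowExcess b W a q ω).toReal
  have hY : Measurable[futureSigma W a] Y := (measurable_windowExcess b W a q).ereal_toReal.neg
  have hindep : IndepFun (W a) Y P := (IndepFun_iff_Indep _ _ _).2 <|
    indep_of_indep_of_le_left
      (indep_of_indep_of_le_right (hBM.indep_futureSigma_pastSigma ha').symm hY.comap_le)
      (measurable_pastSigma W ⟨ha', le_rfl⟩).comap_le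
  have : NullSingletonClass (P.map (W a)) := by
    rw [hBM.map_eq_gaussianReal ha']
    exact nullSingletonClass_gaussianReal (by simpa using ha)
  refine measure_mono_null (fun ω hω => ?_)
    (hindep.measure_eq_eq_zero (hBM.meas _).measurable (hY.mono (hBM.futureSigma_le a) le_rfl))
  simp [Y, hω.out]

section FirstPassage

variable {Ω : Type*} {B : Set (ℝ × ℝ)} {W : ℝ → Ω → ℝ} {ω : Ω}

theorem tauB_le_tauStrict : tauB B W ω ≤ tauStrict B W ω :=
  le_iInf fun r => iInf_le_of_le ⟨r.1, r.2.1, r.2.2.le⟩ le_rfl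

theorem le_boundary_of_lt_tauStrict {t : ℝ} (ht : 0 < t)
    (htau : (t : EReal) < tauStrict B W ω) :
    (W t ω : EReal) ≤ boundary B t :=
  not_lt.1 fun h => (iInf_le_of_le ⟨t, ht, h⟩ le_rfl : tauStrict B W ω ≤ t).not_gt htau

theorem exists_boundary_le_of_tauB_lt {x : EReal} (h : tauB B W ω < x) :
    ∃ s : ℝ, 0 < s ∧ boundary B s ≤ W s ω ∧ (s : EReal) < x := by
  obtain ⟨⟨s, hs, hbs⟩, hsx⟩ := iInf_lt_iff.1 h
  exact ⟨s, hs, hbs, hsx⟩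

theorem exists_windowExcess_eq_of_tauB_lt_tauStrict (hW : Continuous fun t => W t ω)
    (h : tauB B W ω < tauStrict B W ω) :
    ∃ a q : ℚ, 0 < a ∧ windowExcess (boundary B) W a q ω = ((-W a ω : ℝ) : EReal) := by
  obtain ⟨q, hτq, hqτ⟩ := EReal.exists_rat_btwn_of_lt h
  obtain ⟨s, hs, hbs, hsq⟩ := exists_boundary_le_of_tauB_lt hτq
  obtain ⟨a, ha, has⟩ := exists_rat_btwn hs
  refine ⟨a, q, by exact_mod_cast ha, le_antisymm (windowExcess_le hW fun t ht => ?_)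
    (le_windowExcess hW ⟨has, EReal.coe_lt_coe_iff.1 hsq⟩ hbs)⟩
  exact le_boundary_of_lt_tauStrict (ha.trans_le ht.1)
    ((EReal.coe_le_coe_iff.2 ht.2).trans_lt hqτ)

end FirstPassage

theorem tauStrict_eq_tauB_general
    {Ω : Type*} [MeasurableSpace Ω] (P : Measure Ω) [IsProbabilityMeasure P]
    (W : ℝ → Ω → ℝ) (hBM : IsStandardBM P W)
    (B : Set (ℝ × ℝ)) :
    ∀ᵐ ω ∂P, tauStrict B W ω = tauB B W ω := by
  have hnull : P (⋃ (a : ℚ) (q : ℚ) (_ : 0 < a),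
      {ω | windowExcess (boundary B) W a q ω = ((-W a ω : ℝ) : EReal)}) = 0 :=
    measure_iUnion_null fun a => measure_iUnion_null fun q => measure_iUnion_null fun ha =>
      hBM.measure_windowExcess_eq_null _ ha q
  refine ae_iff.2 (measure_mono_null (fun ω hω => ?_) hnull)
  obtain ⟨a, q, ha, h⟩ := exists_windowExcess_eq_of_tauB_lt_tauStrict (hBM.cont ω)
    (tauB_le_tauStrict.lt_of_ne' hω)
  exact mem_iUnion₂.2 ⟨a, q, mem_iUnion.2 ⟨ha, h⟩⟩

/-- Lemma: `τ̃_B = τ_B` almost surely. -/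
theorem tauStrict_eq_tauB
    {Ω : Type*} [MeasurableSpace Ω] (P : Measure Ω) [IsProbabilityMeasure P]
    (W : ℝ → Ω → ℝ) (hBM : IsStandardBM P W)
    (B : Set (ℝ × ℝ)) (hB : IsBarrier B) :
    ∀ᵐ ω ∂P, tauStrict B W ω = tauB B W ω :=
  tauStrict_eq_tauB_general P W hBM B

end
end

section
/- Let g be a survival distribution function and v the value of the associated optimal stopping problem. Then for every t ≥ 0 and x ∈ ℝ, g(t)·P(x + W_t ≥ 0) ≤ v(t,x) ≤ min{g(t), P(x + W_t ≥ 0)}; consequently, for each fixed t, v(t,·) is non-decreasing, lim_{x→−∞} v(t,x) = 0 and lim_{x→∞} v(t,x) = g(t). -/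
open MeasureTheory ProbabilityTheory Filter Set

noncomputable section

/-! Stopping at `γ < t` pays `g (t - γ) ≥ g t`, so every payoff dominates `g t · 1{x + W_t ≥ 0}`
pointwise, and integrating gives the lower bound. The deterministic stopping times `γ ≡ t` and
`γ ≡ 0` give the two upper bounds. The payoff is monotone in `x`, and the limits follow by
squeezing, since `P(x + W_t ≥ 0)` tends to `0` and `1` by continuity of measure. -/

open Topology

section Tails

variable {Ω : Type*}

lemma monotone_setOf_nonneg_add (X : Ω → ℝ) : Monotone fun x : ℝ => {ω | 0 ≤ x + X ω} :=
  fun _ _ hab _ hω => le_trans hω (add_le_add_left hab _)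

variable [MeasurableSpace Ω] {μ : Measure Ω} {X : Ω → ℝ}

lemma measurableSet_setOf_nonneg_add (hX : Measurable X) (x : ℝ) :
    MeasurableSet {ω | 0 ≤ x + X ω} :=
  measurableSet_le measurable_const (measurable_const.add hX)

lemma tendsto_measure_setOf_nonneg_add_atBot [IsFiniteMeasure μ] (hX : Measurable X) :
    Tendsto (fun x => (μ {ω | 0 ≤ x + X ω}).toReal) atBot (𝓝 0) := by
  have hempty : ⋂ x : ℝ, {ω | 0 ≤ x + X ω} = ∅ :=
    eq_empty_iff_forall_notMem.2 fun ω hω => by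
      have := mem_iInter.1 hω (-X ω - 1)
      simp only [mem_ofPred_eq] at this
      linarith
  have h := tendsto_measure_iInter_atBot
    (fun x => (measurableSet_setOf_nonneg_add hX x).nullMeasurableSet)
    (monotone_setOf_nonneg_add X) ⟨0, measure_ne_top μ _⟩
  rw [hempty, measure_empty] at h
  simpa [Function.comp_def] using (ENNReal.tendsto_toReal ENNReal.zero_ne_top).comp h

lemma tendsto_measure_setOf_nonneg_add_atTop [IsProbabilityMeasure μ] (X : Ω → ℝ) :
    Tendsto (fun x => (μ {ω | 0 ≤ x + X ω}).toReal) atTop (𝓝 1) := by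
  have huniv : ⋃ x : ℝ, {ω | 0 ≤ x + X ω} = univ :=
    eq_univ_iff_forall.2 fun ω => mem_iUnion.2 ⟨-X ω, by simp⟩
  have h := tendsto_measure_iUnion_atTop (μ := μ) (monotone_setOf_nonneg_add X)
  rw [huniv, measure_univ] at h
  simpa [Function.comp_def] using (ENNReal.tendsto_toReal ENNReal.one_ne_top).comp h

end Tails

lemma measurable_of_isStoppingTime_of_le {Ω : Type*} {m : MeasurableSpace Ω}
    {f : Filtration ℝ m} {γ : Ω → ℝ} {t : ℝ}
    (hγ : IsStoppingTime f fun ω => (γ ω : WithTop ℝ)) (hle : ∀ ω, γ ω ≤ t) :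
    Measurable γ := by
  simpa using
    ((hγ.measurable_of_le fun ω => WithTop.coe_le_coe.2 (hle ω)).mono (f.le t) le_rfl).untopD 0

section Payoff

variable {Ω : Type*} (W : ℝ → Ω → ℝ) (g : ℝ → ℝ) (t x : ℝ) (γ : Ω → ℝ)

def stopPayoff (ω : Ω) : ℝ :=
  {ω' | γ ω' < t}.indicator (fun ω' => g (t - γ ω')) ω
    + {ω' | γ ω' = t ∧ 0 ≤ x + W t ω'}.indicator 1 ω

variable {W g t x γ}

lemma stopPayoff_nonneg (hg : IsSurvival g) (ω : Ω) : 0 ≤ stopPayoff W g t x γ ω :=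
  add_nonneg
    (indicator_nonneg (fun ω' (hω' : γ ω' < t) => (hg.mem _ (by linarith)).1) ω)
    (indicator_nonneg (fun _ _ => zero_le_one) ω)

lemma stopPayoff_le_one (hg : IsSurvival g) (ω : Ω) : stopPayoff W g t x γ ω ≤ 1 := by
  unfold stopPayoff
  by_cases hlt : γ ω < t
  · have hne : ¬(γ ω = t ∧ 0 ≤ x + W t ω) := fun h => hlt.ne h.1
    simp only [indicator, mem_ofPred_eq, hlt, hne, if_true, if_false, add_zero]
    exact (hg.mem _ (by linarith)).2
  · simp only [indicator, mem_ofPred_eq, hlt, if_false, zero_add]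
    split_ifs <;> simp

lemma monotone_stopPayoff (ω : Ω) : Monotone fun x => stopPayoff W g t x γ ω := by
  intro a b hab
  refine add_le_add le_rfl (indicator_le_indicator_of_subset (fun ω' hω' => ?_) (fun _ => ?_) ω)
  · exact ⟨hω'.1, le_trans hω'.2 (add_le_add_left hab _)⟩
  · exact zero_le_one

lemma mul_indicator_le_stopPayoff (hg : IsSurvival g) (ht : 0 ≤ t) {ω : Ω}
    (hγ : γ ω ∈ Icc 0 t) :
    g t * {ω' | 0 ≤ x + W t ω'}.indicator 1 ω ≤ stopPayoff W g t x γ ω := by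
  obtain ⟨hgt₀, hgt₁⟩ := hg.mem t ht
  unfold stopPayoff
  rcases hγ.2.lt_or_eq with hlt | heq
  · have hne : ¬(γ ω = t ∧ 0 ≤ x + W t ω) := fun h => hlt.ne h.1
    have hmono : g t ≤ g (t - γ ω) :=
      hg.mono (mem_Ici.2 (by linarith)) (mem_Ici.2 ht) (by linarith [hγ.1])
    have hpos : 0 ≤ g (t - γ ω) := (hg.mem _ (by linarith)).1
    simp only [indicator, mem_ofPred_eq, hlt, hne, if_true, if_false, add_zero, Pi.one_apply]
    split_ifs <;> linarith
  · simp only [indicator, mem_ofPred_eq, heq, lt_irrefl, true_and, if_false, zero_add,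
      Pi.one_apply]
    split_ifs <;> linarith

lemma stopPayoff_const_self :
    stopPayoff W g t x (fun _ => t) = {ω | 0 ≤ x + W t ω}.indicator 1 := by
  ext ω
  simp [stopPayoff, indicator]

lemma stopPayoff_const_zero (ht : 0 < t) : stopPayoff W g t x (fun _ => 0) = fun _ => g t := by
  ext ω
  simp [stopPayoff, ht, ht.ne]

lemma integrable_stopPayoff [MeasurableSpace Ω] {P : Measure Ω} [IsFiniteMeasure P]
    (hg : IsSurvival g) (hW : Measurable (W t)) (hγ : Measurable γ) (hle : ∀ ω, γ ω ≤ t) :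
    Integrable (stopPayoff W g t x γ) P := by
  -- `g` is arbitrary on `(-∞, 0)`; measurability comes from the antitone `s ↦ g (max s 0)`.
  have hG : Measurable fun s : ℝ => g (max s 0) :=
    Antitone.measurable fun a b hab =>
      hg.mono (le_max_right a 0) (le_max_right b 0) (max_le_max_right 0 hab)
  have hgγ : (fun ω => g (t - γ ω)) = fun ω => g (max (t - γ ω) 0) := by
    funext ω
    rw [max_eq_left (sub_nonneg.2 (hle ω))]
  have hmeas : Measurable (stopPayoff W g t x γ) := by
    refine Measurable.add ?_ (measurable_const.indicator ?_)
    · rw [hgγ]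
      exact (hG.comp (measurable_const.sub hγ)).indicator (measurableSet_lt hγ measurable_const)
    · exact (measurableSet_eq_fun hγ measurable_const).inter
        (measurableSet_setOf_nonneg_add hW x)
  refine Integrable.of_bound hmeas.aestronglyMeasurable 1 (ae_of_all _ fun ω => ?_)
  rw [Real.norm_of_nonneg (stopPayoff_nonneg hg ω)]
  exact stopPayoff_le_one hg ω

end Payoff

section StopValue

variable {Ω : Type*} [MeasurableSpace Ω] {P : Measure Ω}
  {W : ℝ → Ω → ℝ} {hW : ∀ s, StronglyMeasurable (W s)} {g : ℝ → ℝ} {t x : ℝ}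

abbrev AdmissibleStoppingTime (W : ℝ → Ω → ℝ) (hW : ∀ s, StronglyMeasurable (W s))
    (t : ℝ) : Type _ :=
  {γ : Ω → ℝ // IsStoppingTime (Filtration.natural W hW) (fun ω => (γ ω : WithTop ℝ)) ∧
    ∀ ω, γ ω ∈ Icc 0 t}

lemma AdmissibleStoppingTime.measurable (γ : AdmissibleStoppingTime W hW t) : Measurable γ.1 :=
  measurable_of_isStoppingTime_of_le γ.2.1 fun ω => (γ.2.2 ω).2

lemma integrable_stopPayoff_admissible [IsFiniteMeasure P] (hg : IsSurvival g)
    (γ : AdmissibleStoppingTime W hW t) :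
    Integrable (stopPayoff W g t x γ.1) P :=
  integrable_stopPayoff hg (hW t).measurable γ.measurable fun ω => (γ.2.2 ω).2

lemma bddBelow_stopPayoff_integrals (hg : IsSurvival g) :
    BddBelow
      (range fun γ : AdmissibleStoppingTime W hW t => ∫ ω, stopPayoff W g t x γ.1 ω ∂P) :=
  ⟨0, by
    rintro _ ⟨γ, rfl⟩
    exact integral_nonneg (stopPayoff_nonneg hg)⟩

lemma stopValue_le_integral (hg : IsSurvival g) (γ : AdmissibleStoppingTime W hW t) :
    stopValue P W hW g t x ≤ ∫ ω, stopPayoff W g t x γ.1 ω ∂P :=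
  ciInf_le (bddBelow_stopPayoff_integrals hg) γ

lemma le_stopValue {c : ℝ} (ht : 0 ≤ t)
    (h : ∀ γ : AdmissibleStoppingTime W hW t, c ≤ ∫ ω, stopPayoff W g t x γ.1 ω ∂P) :
    c ≤ stopValue P W hW g t x :=
  have : Nonempty (AdmissibleStoppingTime W hW t) :=
    ⟨⟨fun _ => t, isStoppingTime_const _ t, fun _ => ⟨ht, le_rfl⟩⟩⟩
  le_ciInf h

lemma stopValue_nonneg (hg : IsSurvival g) (ht : 0 ≤ t) : 0 ≤ stopValue P W hW g t x :=
  le_stopValue ht fun _ => integral_nonneg (stopPayoff_nonneg hg)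

lemma stopValue_le_measure (hg : IsSurvival g) (ht : 0 ≤ t) :
    stopValue P W hW g t x ≤ (P {ω | 0 ≤ x + W t ω}).toReal := by
  have h := stopValue_le_integral (P := P) (W := W) (hW := hW) (x := x) hg
    ⟨fun _ => t, isStoppingTime_const _ t, fun _ => ⟨ht, le_rfl⟩⟩
  rwa [stopPayoff_const_self,
    integral_indicator_one (measurableSet_setOf_nonneg_add (hW t).measurable x)] at h

lemma stopValue_le_survival [IsProbabilityMeasure P] (hg : IsSurvival g) (ht : 0 ≤ t) :
    stopValue P W hW g t x ≤ g t := by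
  rcases ht.eq_or_lt with rfl | htpos
  · calc stopValue P W hW g 0 x ≤ (P {ω | 0 ≤ x + W 0 ω}).toReal :=
          stopValue_le_measure hg le_rfl
      _ ≤ 1 := by simpa using ENNReal.toReal_mono ENNReal.one_ne_top prob_le_one
      _ = g 0 := hg.init.symm
  · have h := stopValue_le_integral (P := P) (W := W) (hW := hW) (x := x) hg
      ⟨fun _ => 0, isStoppingTime_const _ 0, fun _ => ⟨le_rfl, ht⟩⟩
    rwa [stopPayoff_const_zero htpos, integral_const, probReal_univ, one_smul] at h

lemma mul_measure_le_stopValue [IsFiniteMeasure P] (hg : IsSurvival g) (ht : 0 ≤ t) :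
    g t * (P {ω | 0 ≤ x + W t ω}).toReal ≤ stopValue P W hW g t x := by
  have hA := measurableSet_setOf_nonneg_add (hW t).measurable x
  refine le_stopValue ht fun γ => ?_
  calc g t * (P {ω | 0 ≤ x + W t ω}).toReal
      = ∫ ω, g t * {ω' | 0 ≤ x + W t ω'}.indicator 1 ω ∂P := by
        rw [integral_const_mul, integral_indicator_one hA]
        rfl
    _ ≤ ∫ ω, stopPayoff W g t x γ.1 ω ∂P :=
        integral_mono (((integrable_const 1).indicator hA).const_mul _)
          (integrable_stopPayoff_admissible hg γ)
          fun ω => mul_indicator_le_stopPayoff hg ht (γ.2.2 ω)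

lemma monotone_stopValue [IsFiniteMeasure P] (hg : IsSurvival g) :
    Monotone fun x => stopValue P W hW g t x :=
  fun _ _ hab => ciInf_mono (bddBelow_stopPayoff_integrals hg) fun γ =>
    integral_mono (integrable_stopPayoff_admissible hg γ) (integrable_stopPayoff_admissible hg γ)
      fun ω => monotone_stopPayoff ω hab

end StopValue

/-- Elementary bounds for the optimal stopping value:
`g(t)·P(x + W_t ≥ 0) ≤ v(t,x) ≤ min{g(t), P(x + W_t ≥ 0)}`; consequently `v(t,·)` is
non-decreasing with limits `0` at `-∞` and `g(t)` at `+∞`. -/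
theorem stopValue_bounds
    {Ω : Type*} [MeasurableSpace Ω] (P : Measure Ω) [IsProbabilityMeasure P]
    (W : ℝ → Ω → ℝ) (hBM : IsStandardBM P W)
    (g : ℝ → ℝ) (hg : IsSurvival g) :
    ∀ t : ℝ, 0 ≤ t →
      (∀ x : ℝ,
        g t * (P {ω | 0 ≤ x + W t ω}).toReal ≤ stopValue P W hBM.meas g t x ∧
        stopValue P W hBM.meas g t x ≤ min (g t) ((P {ω | 0 ≤ x + W t ω}).toReal)) ∧
      Monotone (fun x => stopValue P W hBM.meas g t x) ∧
      Tendsto (fun x => stopValue P W hBM.meas g t x) atBot (nhds 0) ∧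
      Tendsto (fun x => stopValue P W hBM.meas g t x) atTop (nhds (g t)) := by
  intro t ht
  refine ⟨fun x => ⟨mul_measure_le_stopValue hg ht,
      le_min (stopValue_le_survival hg ht) (stopValue_le_measure hg ht)⟩,
    monotone_stopValue hg, ?_, ?_⟩
  · exact tendsto_of_tendsto_of_tendsto_of_le_of_le tendsto_const_nhds
      (tendsto_measure_setOf_nonneg_add_atBot (hBM.meas t).measurable)
      (fun _ => stopValue_nonneg hg ht) fun _ => stopValue_le_measure hg ht
  · have hlow :
        Tendsto (fun x => g t * (P {ω | 0 ≤ x + W t ω}).toReal) atTop (𝓝 (g t)) := by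
      simpa using (tendsto_measure_setOf_nonneg_add_atTop (W t)).const_mul (g t)
    exact tendsto_of_tendsto_of_tendsto_of_le_of_le hlow tendsto_const_nhds
      (fun _ => mul_measure_le_stopValue hg ht) fun _ => stopValue_le_survival hg ht
end
end
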